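/- arXiv:2112.15116 — 2 statements merged into one kernel-verified Lean document; each statement's English description precedes it below -/
import Mathlib

section
/- For every quaternion q and integer j ≥ 2, the 4-dimensional Laplacian applied to the monomial power q ↦ q^j gives Δ(q^j) = −2 j(j−1) Q_{j−2}(q,q̄), where Q_s are the quaternionic Appell polynomials; moreover Δ(q^0) = Δ(q^1) = 0. -/
open Quaternion Real MeasureTheory

noncomputable section

/-- The quaternion imaginary unit `i`. -/
def qi : ℍ[ℝ] := ⟨0,1,0,0⟩
/-- The quaternion imaginary unit `j`. -/
def qj : ℍ[ℝ] := ⟨0,0,1,0⟩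
/-- The quaternion imaginary unit `k`. -/
def qk : ℍ[ℝ] := ⟨0,0,0,1⟩

/-- Directional (partial) derivative of `f : ℍ → ℍ` at `q` in direction `v`. -/
def pd (v : ℍ[ℝ]) (f : ℍ[ℝ] → ℍ[ℝ]) (q : ℍ[ℝ]) : ℍ[ℝ] := fderiv ℝ f q v

/-- The Cauchy–Fueter operator `D = ∂_{x₀} + i∂_{x₁} + j∂_{x₂} + k∂_{x₃}`. -/
def Dop (f : ℍ[ℝ] → ℍ[ℝ]) (q : ℍ[ℝ]) : ℍ[ℝ] :=
  pd 1 f q + qi * pd qi f q + qj * pd qj f q + qk * pd qk f q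

/-- The conjugate Cauchy–Fueter operator `D̄ = ∂_{x₀} - i∂_{x₁} - j∂_{x₂} - k∂_{x₃}`. -/
def Dbar (f : ℍ[ℝ] → ℍ[ℝ]) (q : ℍ[ℝ]) : ℍ[ℝ] :=
  pd 1 f q - qi * pd qi f q - qj * pd qj f q - qk * pd qk f q

/-- The 4-dimensional Laplacian `Δ = ∂²_{x₀} + ∂²_{x₁} + ∂²_{x₂} + ∂²_{x₃}`. -/
def qlap (f : ℍ[ℝ] → ℍ[ℝ]) (q : ℍ[ℝ]) : ℍ[ℝ] :=
  pd 1 (pd 1 f) q + pd qi (pd qi f) q + pd qj (pd qj f) q + pd qk (pd qk f) q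

/-- The quaternionic Appell polynomials
`Q_k(q,q̄) = Σ_{j=0}^k (2(k-j+1)/((k+1)(k+2))) q^{k-j} q̄^j`. -/
def Qa (k : ℕ) (q : ℍ[ℝ]) : ℍ[ℝ] :=
  ∑ j ∈ Finset.range (k+1),
    ((2*((k:ℝ)-j+1))/(((k:ℝ)+1)*((k:ℝ)+2))) • (q^(k-j) * (star q)^j)

/-- The generalized Appell polyanalytic polynomials `M_{k,s}(q,q̄) = x₀^k Q_s(q,q̄)`,
where `x₀ = Re q`. -/
def Ma (k s : ℕ) (q : ℍ[ℝ]) : ℍ[ℝ] := q.re ^ k • Qa s q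

/-!
Leibniz's rule gives `Δ(f p) = (Δf) p + 2 Σ_v (∂_v f) v`, the sum over `v ∈ {1, i, j, k}`, and
`∂_v p^(n+1) = Σ_{a+b=n} p^a v p^b`. Since `Σ_v v x v = -2 x̄`, this yields the recursion
`Δ p^(n+2) = (Δ p^(n+1)) p - 4 Σ_{a+b=n} p^a p̄^b`; as `p` commutes with `p̄` it solves to
`Δ p^(n+2) = -4 Σ_{a+b=n} (a+1) p^a p̄^b`, which is `-2 (n+2)(n+1) Q_n`.
-/

open Finset

section Leibniz

variable {f g : ℍ[ℝ] → ℍ[ℝ]} {q : ℍ[ℝ]}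

theorem pd_add (hf : DifferentiableAt ℝ f q) (hg : DifferentiableAt ℝ g q) (v : ℍ[ℝ]) :
    pd v (fun p => f p + g p) q = pd v f q + pd v g q := by
  rw [pd, fderiv_fun_add hf hg]
  rfl

theorem pd_mul (hf : DifferentiableAt ℝ f q) (hg : DifferentiableAt ℝ g q) (v : ℍ[ℝ]) :
    pd v (fun p => f p * g p) q = pd v f q * g q + f q * pd v g q := by
  rw [pd, fderiv_fun_mul' hf hg]
  simp [pd, add_comm]

theorem differentiable_pd (hf : ContDiff ℝ 2 f) (v : ℍ[ℝ]) : Differentiable ℝ (pd v f) :=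
  ((hf.fderiv_right (m := 1) (by norm_num)).clm_apply contDiff_const).differentiable one_ne_zero

theorem pd_pd_mul (hf : ContDiff ℝ 2 f) (hg : ContDiff ℝ 2 g) (v : ℍ[ℝ]) :
    pd v (pd v (fun p => f p * g p)) q =
      pd v (pd v f) q * g q + 2 • (pd v f q * pd v g q) + f q * pd v (pd v g) q := by
  have hf1 := hf.differentiable two_ne_zero
  have hg1 := hg.differentiable two_ne_zero
  have hf2 := differentiable_pd hf v
  have hg2 := differentiable_pd hg v
  have hfg : pd v (fun p => f p * g p) = fun p => pd v f p * g p + f p * pd v g p :=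
    funext fun p => pd_mul (hf1 p) (hg1 p) v
  rw [hfg, pd_add ((hf2 q).fun_mul (hg1 q)) ((hf1 q).fun_mul (hg2 q)), pd_mul (hf2 q) (hg1 q),
    pd_mul (hf1 q) (hg2 q)]
  abel

end Leibniz

theorem qlap_mul {f g : ℍ[ℝ] → ℍ[ℝ]} (hf : ContDiff ℝ 2 f) (hg : ContDiff ℝ 2 g) (q : ℍ[ℝ]) :
    qlap (fun p => f p * g p) q = qlap f q * g q
      + 2 • (pd 1 f q * pd 1 g q + pd qi f q * pd qi g q + pd qj f q * pd qj g q
        + pd qk f q * pd qk g q) + f q * qlap g q := by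
  simp only [qlap, pd_pd_mul hf hg, add_mul, mul_add, smul_add]
  abel

theorem pd_id (v : ℍ[ℝ]) : pd v (fun p => p) = fun _ => v := by
  ext1 q
  simp [pd]

theorem pd_const (v c : ℍ[ℝ]) : pd v (fun _ => c) = fun _ => 0 := by
  ext1 q
  simp [pd]

theorem qlap_id (q : ℍ[ℝ]) : qlap (fun p => p) q = 0 := by
  simp [qlap, pd_id, pd_const]

theorem qlap_mul_id {f : ℍ[ℝ] → ℍ[ℝ]} (hf : ContDiff ℝ 2 f) (q : ℍ[ℝ]) :
    qlap (fun p => f p * p) q =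
      qlap f q * q + 2 • (pd 1 f q * 1 + pd qi f q * qi + pd qj f q * qj + pd qk f q * qk) := by
  simp only [qlap_mul (g := fun p => p) hf contDiff_id, pd_id, qlap_id, mul_zero, add_zero]

theorem sandwich_sum_eq_neg_two_smul_star (x : ℍ[ℝ]) :
    1 * x * 1 + qi * x * qi + qj * x * qj + qk * x * qk = (-2 : ℝ) • star x := by
  ext <;> simp [Quaternion.re_mul, Quaternion.imI_mul, Quaternion.imJ_mul,
    Quaternion.imK_mul] <;> simp [qi, qj, qk] <;> ring

theorem pd_pow_succ (n : ℕ) (v q : ℍ[ℝ]) :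
    pd v (fun p => p ^ (n + 1)) q = ∑ x ∈ antidiagonal n, q ^ x.1 * v * q ^ x.2 := by
  induction n with
  | zero => simp [pd]
  | succ n ih =>
    simp_rw [pow_succ _ (n + 1)]
    rw [pd_mul (f := fun p => p ^ (n + 1)) (g := fun p => p) (q := q) (by fun_prop) (by fun_prop),
      ih, pd_id, Nat.sum_antidiagonal_succ', sum_mul, add_comm]
    simp [pow_succ, mul_assoc]

theorem pow_mul_star_pow_mul_self (a b : ℕ) (q : ℍ[ℝ]) :
    q ^ a * star q ^ b * q = q ^ (a + 1) * star q ^ b := by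
  rw [mul_assoc, ((IsStarNormal.star_comm_self (x := q)).pow_left b).eq, ← mul_assoc, pow_succ]

theorem qlap_pow_add_two (n : ℕ) (q : ℍ[ℝ]) :
    qlap (fun p => p ^ (n + 2)) q = qlap (fun p => p ^ (n + 1)) q * q
      + (-4 : ℝ) • ∑ x ∈ antidiagonal n, q ^ x.1 * star q ^ x.2 := by
  simp_rw [pow_succ _ (n + 1)]
  rw [qlap_mul_id (f := fun p => p ^ (n + 1)) (by fun_prop)]
  simp only [pd_pow_succ, sum_mul, ← sum_add_distrib, smul_sum]
  congr 1
  refine sum_congr rfl fun x _ => ?_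
  have hfactor : q ^ x.1 * 1 * q ^ x.2 * 1 + q ^ x.1 * qi * q ^ x.2 * qi
      + q ^ x.1 * qj * q ^ x.2 * qj + q ^ x.1 * qk * q ^ x.2 * qk
      = q ^ x.1 * (1 * q ^ x.2 * 1 + qi * q ^ x.2 * qi + qj * q ^ x.2 * qj + qk * q ^ x.2 * qk) := by
    noncomm_ring
  rw [hfactor, sandwich_sum_eq_neg_two_smul_star, star_pow,
    mul_smul_comm, ← Nat.cast_smul_eq_nsmul ℝ, smul_smul]
  norm_num

theorem qlap_pow_zero (q : ℍ[ℝ]) : qlap (fun p => p ^ 0) q = 0 := by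
  simp [qlap, pd_const]

theorem qlap_pow_one (q : ℍ[ℝ]) : qlap (fun p => p ^ 1) q = 0 := by
  simpa using qlap_id q

theorem qlap_pow_add_two_eq_sum (n : ℕ) (q : ℍ[ℝ]) :
    qlap (fun p => p ^ (n + 2)) q =
      (-4 : ℝ) • ∑ x ∈ antidiagonal n, ((x.1 : ℝ) + 1) • (q ^ x.1 * star q ^ x.2) := by
  induction n with
  | zero => simp [qlap_pow_add_two, qlap_id]
  | succ n ih =>
    rw [qlap_pow_add_two, ih, smul_mul_assoc, ← smul_add, sum_mul]
    simp only [smul_mul_assoc, pow_mul_star_pow_mul_self, Nat.sum_antidiagonal_succ]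
    congr 1
    simp only [Nat.cast_add, Nat.cast_one, Nat.cast_zero, zero_add, one_smul, add_smul (_ + 1 : ℝ),
      sum_add_distrib]
    abel

theorem Qa_eq_sum_antidiagonal (n : ℕ) (q : ℍ[ℝ]) :
    Qa n q = (2 / (((n : ℝ) + 1) * ((n : ℝ) + 2))) •
      ∑ x ∈ antidiagonal n, ((x.1 : ℝ) + 1) • (q ^ x.1 * star q ^ x.2) := by
  rw [Qa, ← Nat.sum_antidiagonal_swap, Nat.sum_antidiagonal_eq_sum_range_succ_mk, smul_sum]
  refine sum_congr rfl fun k hk => ?_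
  rw [smul_smul, Prod.swap_prod_mk, Nat.cast_sub (Nat.le_of_lt_succ (mem_range.mp hk))]
  congr 1
  ring

/-- For every quaternion `q` and `j ≥ 2`, `Δ(q^j) = −2 j(j−1) Q_{j−2}(q,q̄)`;
moreover `Δ(q^0) = Δ(q^1) = 0`. -/
theorem laplacian_monomial :
    (∀ j : ℕ, 2 ≤ j → ∀ q : ℍ[ℝ],
        qlap (fun p => p^j) q = (-2 * (j:ℝ) * ((j:ℝ) - 1)) • Qa (j-2) q) ∧
    (∀ q : ℍ[ℝ], qlap (fun p => p^0) q = 0 ∧ qlap (fun p => p^1) q = 0) := by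
  refine ⟨fun j hj q => ?_, fun q => ⟨qlap_pow_zero q, qlap_pow_one q⟩⟩
  obtain ⟨n, rfl⟩ := Nat.exists_eq_add_of_le' hj
  rw [qlap_pow_add_two_eq_sum, Nat.add_sub_cancel, Qa_eq_sum_antidiagonal, smul_smul]
  congr 1
  push_cast
  field_simp
  ring
end
end

section
/- Define the generalized Appell polyanalytic polynomials M_{k,s}(q,q̄) = x_0^k Q_s(q,q̄), where x_0 = Re(q). Then for any fixed n ≥ 0, 0 ≤ k ≤ n and s ≥ k+1, one has D̄^{k+1}(M_{k,s}(q,q̄)) = Σ_{j=1}^{k+1} 2^j · C(k+1,j) · k!·s!/((j−1)!(s−j)!) · M_{j−1,s−j}(q,q̄). -/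
open Quaternion Real MeasureTheory

noncomputable section

/-!
At a point, `D̄ f` only depends on the derivative `L` of `f` there: it is
`L 1 - i L(i) - j L(j) - k L(k)`. The identity `i x i + j x j + k x k = -x - 2 x̄` evaluates this
on the sandwich maps `v ↦ a v b` and `v ↦ a v̄ b` as `2 (a + ā) b` and `-2 ā b`. Since `q` and `q̄`
commute, `D̄ (q^m q̄^j)` becomes an explicit combination of monomials `q^(n-1-r) q̄^r` (with a
diagonal term and two tail sums), and a summation by parts of the Appell coefficients gives the
Appell property `D̄ Q_s = 2 s Q_{s-1}`.

As `x₀` is real, `D̄ (x₀^a Q_b) = a x₀^(a-1) Q_b + 2 b x₀^a Q_(b-1)`: `D̄` acts on the `M_{a,b}` as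
the sum of two commuting lowering operators, so `D̄^m M_{k,s}` expands by Pascal's rule. For
`m = k + 1` the term lowering `x₀^k` `k + 1` times vanishes.
-/

instance : StarModule ℝ ℍ[ℝ] := ⟨fun r x => by ext <;> simp⟩

open Finset

def reCLM : ℍ[ℝ] →L[ℝ] ℝ := LinearMap.toContinuousLinearMap (QuaternionAlgebra.reₗ (-1) 0 (-1))

@[simp] lemma reCLM_apply (p : ℍ[ℝ]) : reCLM p = p.re := rfl

@[fun_prop] lemma differentiable_re : Differentiable ℝ fun p : ℍ[ℝ] => p.re :=
  reCLM.differentiable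

lemma differentiable_Qa (b : ℕ) : Differentiable ℝ (Qa b) := by
  unfold Qa
  fun_prop

@[fun_prop] lemma differentiable_Ma (a b : ℕ) : Differentiable ℝ (Ma a b) := by
  unfold Ma Qa
  fun_prop

lemma star_qi : star qi = -qi := Quaternion.star_eq_neg.mpr rfl

lemma star_qj : star qj = -qj := Quaternion.star_eq_neg.mpr rfl

lemma star_qk : star qk = -qk := Quaternion.star_eq_neg.mpr rfl

lemma qi_mul_mul_qi_add (x : ℍ[ℝ]) :
    qi * x * qi + qj * x * qj + qk * x * qk = -x - 2 * star x := by
  rw [two_mul]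
  ext <;> simp [Quaternion.re_mul, Quaternion.imI_mul, Quaternion.imJ_mul, Quaternion.imK_mul] <;>
    simp [qi, qj, qk]
  ring

def dbarSymbol : (ℍ[ℝ] →L[ℝ] ℍ[ℝ]) →ₗ[ℝ] ℍ[ℝ] where
  toFun L := L 1 - qi * L qi - qj * L qj - qk * L qk
  map_add' L M := by simp only [add_apply, mul_add]; abel
  map_smul' r L := by simp [smul_sub]

lemma Dbar_eq_dbarSymbol (f : ℍ[ℝ] → ℍ[ℝ]) (q : ℍ[ℝ]) : Dbar f q = dbarSymbol (fderiv ℝ f q) :=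
  rfl

lemma dbarSymbol_mulLeftRight (a b : ℍ[ℝ]) :
    dbarSymbol (ContinuousLinearMap.mulLeftRight ℝ ℍ[ℝ] a b) = 2 * (a + star a) * b := by
  simp only [dbarSymbol, LinearMap.coe_mk, AddHom.coe_mk, ContinuousLinearMap.mulLeftRight_apply]
  calc a * 1 * b - qi * (a * qi * b) - qj * (a * qj * b) - qk * (a * qk * b)
      = (a - (qi * a * qi + qj * a * qj + qk * a * qk)) * b := by noncomm_ring
    _ = 2 * (a + star a) * b := by rw [qi_mul_mul_qi_add]; noncomm_ring

lemma dbarSymbol_mulLeftRight_comp_star (a b : ℍ[ℝ]) :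
    dbarSymbol ((ContinuousLinearMap.mulLeftRight ℝ ℍ[ℝ] a b).comp
      (starL' ℝ : ℍ[ℝ] ≃L[ℝ] ℍ[ℝ]).toContinuousLinearMap) = -(2 * star a * b) := by
  simp only [dbarSymbol, LinearMap.coe_mk, AddHom.coe_mk, ContinuousLinearMap.comp_apply,
    ContinuousLinearMap.mulLeftRight_apply, ContinuousLinearEquiv.coe_coe, starL'_apply, star_one,
    star_qi, star_qj, star_qk]
  calc a * 1 * b - qi * (a * -qi * b) - qj * (a * -qj * b) - qk * (a * -qk * b)
      = (a + (qi * a * qi + qj * a * qj + qk * a * qk)) * b := by noncomm_ring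
    _ = -(2 * star a * b) := by rw [qi_mul_mul_qi_add]; noncomm_ring

section DbarLinear

variable {q : ℍ[ℝ]}

lemma Dbar_sum {ι : Type*} (s : Finset ι) (F : ι → ℍ[ℝ] → ℍ[ℝ])
    (h : ∀ i ∈ s, DifferentiableAt ℝ (F i) q) :
    Dbar (fun p => ∑ i ∈ s, F i p) q = ∑ i ∈ s, Dbar (F i) q := by
  rw [Dbar_eq_dbarSymbol, fderiv_fun_sum h, map_sum]
  rfl

lemma Dbar_const_smul (c : ℝ) (f : ℍ[ℝ] → ℍ[ℝ]) :
    Dbar (fun p => c • f p) q = c • Dbar f q := by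
  rw [Dbar_eq_dbarSymbol, show (fun p => c • f p) = c • f from rfl, fderiv_const_smul_field,
    Pi.smul_apply, map_smul]
  rfl

end DbarLinear

lemma hasFDerivAt_pow_mul_star_pow (m j : ℕ) (q : ℍ[ℝ]) :
    HasFDerivAt (fun p : ℍ[ℝ] => p ^ m * star p ^ j)
      (∑ i ∈ range m,
          ContinuousLinearMap.mulLeftRight ℝ ℍ[ℝ] (q ^ (m - 1 - i)) (q ^ i * star q ^ j) +
        ∑ i ∈ range j,
          (ContinuousLinearMap.mulLeftRight ℝ ℍ[ℝ] (q ^ m * star q ^ (j - 1 - i)) (star q ^ i)).comp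
            (starL' ℝ : ℍ[ℝ] ≃L[ℝ] ℍ[ℝ]).toContinuousLinearMap) q := by
  have hstar := (hasFDerivAt_pow' (𝕜 := ℝ) j (x := star q)).comp q
    (starL' ℝ : ℍ[ℝ] ≃L[ℝ] ℍ[ℝ]).hasFDerivAt
  refine ((hasFDerivAt_pow' m).mul' hstar).congr_fderiv (ContinuousLinearMap.ext fun v => ?_)
  simp [sum_mul, mul_sum, mul_assoc, add_comm]

def qmonomial (n r : ℕ) (q : ℍ[ℝ]) : ℍ[ℝ] := q ^ (n - r) * star q ^ r

lemma Dbar_pow_mul_star_pow (m j : ℕ) (q : ℍ[ℝ]) :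
    Dbar (fun p => p ^ m * star p ^ j) q =
      (2 * m : ℝ) • qmonomial (m + j - 1) j q +
        (2 : ℝ) • (∑ r ∈ Ico j (m + j), qmonomial (m + j - 1) r q -
          ∑ r ∈ Ico m (m + j), qmonomial (m + j - 1) r q) := by
  have hpow : ∀ i ∈ range m,
      2 * (q ^ (m - 1 - i) + star (q ^ (m - 1 - i))) * (q ^ i * star q ^ j) =
        (2 : ℝ) • qmonomial (m + j - 1) j q +
          (2 : ℝ) • qmonomial (m + j - 1) (m - 1 - i + j) q := by
    intro i hi
    have e1 : m + j - 1 - j = m - 1 - i + i := by have := mem_range.mp hi; omega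
    have e2 : m + j - 1 - (m - 1 - i + j) = i := by have := mem_range.mp hi; omega
    have hcomm := (Commute.pow_pow (star_comm_self' q) (m - 1 - i) i).eq
    rw [qmonomial, qmonomial, e1, e2, star_pow, pow_add, pow_add, two_smul, two_smul]
    calc 2 * (q ^ (m - 1 - i) + star q ^ (m - 1 - i)) * (q ^ i * star q ^ j)
        = 2 * (q ^ (m - 1 - i) * q ^ i * star q ^ j) +
            2 * (star q ^ (m - 1 - i) * q ^ i * star q ^ j) := by noncomm_ring
      _ = _ := by rw [hcomm]; noncomm_ring
  have hstar : ∀ i ∈ range j, -(2 * star (q ^ m * star q ^ (j - 1 - i)) * star q ^ i) =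
      -((2 : ℝ) • qmonomial (m + j - 1) (m + i) q) := by
    intro i hi
    have e : m + j - 1 - (m + i) = j - 1 - i := by have := mem_range.mp hi; omega
    rw [star_mul, star_pow, star_pow, star_star, two_smul, two_mul, qmonomial, e, pow_add]
    noncomm_ring
  have hreflect : ∑ i ∈ range m, qmonomial (m + j - 1) (m - 1 - i + j) q =
      ∑ i ∈ range m, qmonomial (m + j - 1) (j + i) q := by
    rw [← sum_range_reflect _ m]
    refine sum_congr rfl fun i hi => ?_
    have := mem_range.mp hi
    congr 1
    omega
  rw [Dbar_eq_dbarSymbol, (hasFDerivAt_pow_mul_star_pow m j q).fderiv, map_add, map_sum, map_sum]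
  simp only [dbarSymbol_mulLeftRight, dbarSymbol_mulLeftRight_comp_star]
  rw [sum_congr rfl hpow, sum_congr rfl hstar, sum_add_distrib, sum_const, card_range,
    sum_neg_distrib, ← smul_sum, ← smul_sum, hreflect, sum_Ico_eq_sum_range, sum_Ico_eq_sum_range,
    add_tsub_cancel_left, add_tsub_cancel_right]
  module

lemma sum_range_smul_sum_Ico_comm {R M : Type*} [Semiring R] [AddCommMonoid M] [Module R M]
    (a : ℕ → R) (e : ℕ → M) (n : ℕ) :
    ∑ t ∈ range (n + 1), a t • ∑ r ∈ Ico t n, e r =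
      ∑ r ∈ range n, (∑ t ∈ range (r + 1), a t) • e r := by
  rw [sum_range_succ, Ico_self, sum_empty, smul_zero, add_zero]
  simp_rw [smul_sum, sum_smul]
  rw [range_eq_Ico, sum_Ico_Ico_comm]
  simp only [← range_eq_Ico]

lemma Dbar_sum_smul_qmonomial (n : ℕ) (c : ℕ → ℝ) (q : ℍ[ℝ]) :
    Dbar (fun p => ∑ r ∈ range (n + 1), c r • qmonomial n r p) q =
      ∑ r ∈ range n, (2 * (n - r) * c r + 2 * ∑ t ∈ range (r + 1), (c t - c (n - t))) •
        qmonomial (n - 1) r q := by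
  set T : ℕ → ℍ[ℝ] := fun x => ∑ i ∈ Ico x n, qmonomial (n - 1) i q
  have hterm : ∀ r ∈ range (n + 1), Dbar (fun p => c r • qmonomial n r p) q =
      (2 * (n - r) * c r) • qmonomial (n - 1) r q + (2 * c r) • (T r - T (n - r)) := by
    intro r hr
    have hrn : r ≤ n := Nat.lt_succ_iff.mp (mem_range.mp hr)
    have h := Dbar_pow_mul_star_pow (n - r) r q
    rw [Nat.sub_add_cancel hrn, Nat.cast_sub hrn] at h
    rw [Dbar_const_smul, show qmonomial n r = fun p => p ^ (n - r) * star p ^ r from rfl, h]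
    module
  have hreflect : ∑ r ∈ range (n + 1), (2 * c r) • T (n - r) =
      ∑ r ∈ range (n + 1), (2 * c (n - r)) • T r := by
    rw [← sum_range_reflect _ (n + 1)]
    refine sum_congr rfl fun r hr => ?_
    rw [add_tsub_cancel_right, Nat.sub_sub_self (Nat.lt_succ_iff.mp (mem_range.mp hr))]
  rw [Dbar_sum]
  · rw [sum_congr rfl hterm, sum_add_distrib, sum_range_succ, sub_self, mul_zero, zero_mul,
      zero_smul, add_zero]
    simp_rw [smul_sub]
    rw [sum_sub_distrib, hreflect, ← sum_sub_distrib]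
    simp_rw [← sub_smul]
    rw [sum_range_smul_sum_Ico_comm, ← sum_add_distrib]
    refine sum_congr rfl fun r _ => ?_
    rw [add_smul, mul_sum]
    simp_rw [mul_sub]
  · intro r _
    unfold qmonomial
    fun_prop

lemma sum_range_succ_sub_two_mul (x : ℝ) (r : ℕ) :
    ∑ t ∈ range (r + 1), (x - 2 * t) = (r + 1) * (x - r) := by
  induction r with
  | zero => simp
  | succ r ih => rw [sum_range_succ, ih]; push_cast; ring

lemma Dbar_Qa (b : ℕ) (q : ℍ[ℝ]) : Dbar (Qa b) q = (2 * b : ℝ) • Qa (b - 1) q := by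
  rw [show Qa b = fun p => ∑ r ∈ range (b + 1),
      (2 * ((b : ℝ) - r + 1) / ((b + 1) * (b + 2))) • qmonomial b r p from rfl,
    Dbar_sum_smul_qmonomial]
  rcases b with _ | n
  · simp
  rw [add_tsub_cancel_right, Qa, smul_sum]
  refine sum_congr rfl fun r hr => ?_
  have hrn : r ≤ n := Nat.lt_succ_iff.mp (mem_range.mp hr)
  have hcoeff : ∀ t ∈ range (r + 1),
      2 * ((↑(n + 1) : ℝ) - t + 1) / ((↑(n + 1) + 1) * (↑(n + 1) + 2)) -
        2 * ((↑(n + 1) : ℝ) - ↑(n + 1 - t) + 1) / ((↑(n + 1) + 1) * (↑(n + 1) + 2)) =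
      2 / ((n + 2) * (n + 3)) * ((n + 1 : ℝ) - 2 * t) := by
    intro t ht
    have htn : t ≤ n + 1 := by have := mem_range.mp ht; omega
    rw [Nat.cast_sub htn]
    push_cast
    field_simp
    ring
  rw [sum_congr rfl hcoeff, ← mul_sum, sum_range_succ_sub_two_mul, smul_smul, qmonomial]
  congr 1
  push_cast
  field_simp
  ring

lemma Dbar_re_pow_smul (a : ℕ) {g : ℍ[ℝ] → ℍ[ℝ]} {q : ℍ[ℝ]} (hg : DifferentiableAt ℝ g q) :
    Dbar (fun p => p.re ^ a • g p) q = (a * q.re ^ (a - 1)) • g q + q.re ^ a • Dbar g q := by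
  have h := ((reCLM.hasFDerivAt (x := q)).pow a).smul hg.hasFDerivAt
  rw [Dbar_eq_dbarSymbol, show (fun p => p.re ^ a • g p) = (fun p => reCLM p ^ a) • g from rfl,
    h.fderiv]
  have hi : qi.re = 0 := rfl
  have hj : qj.re = 0 := rfl
  have hk : qk.re = 0 := rfl
  simp only [dbarSymbol, reCLM_apply, nsmul_eq_mul, LinearMap.coe_mk, AddHom.coe_mk, add_apply,
    smul_apply, ContinuousLinearMap.smulRight_apply, re_one, smul_eq_mul, mul_one, hi, hj, hk,
    mul_zero, zero_smul, add_zero, Algebra.mul_smul_comm, Dbar, pd]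
  module

lemma Dbar_Ma (a b : ℕ) (q : ℍ[ℝ]) :
    Dbar (Ma a b) q = (a : ℝ) • Ma (a - 1) b q + (2 * b : ℝ) • Ma a (b - 1) q := by
  rw [show Ma a b = fun p => p.re ^ a • Qa b p from rfl,
    Dbar_re_pow_smul a (differentiable_Qa b q), Dbar_Qa, Ma, Ma]
  module

/-- `k.descFactorial i` vanishes for `i > k`, which makes the truncated `k - i` harmless. -/
lemma iterate_Dbar_Ma (m k s : ℕ) (q : ℍ[ℝ]) :
    Dbar^[m] (Ma k s) q = ∑ ij ∈ antidiagonal m, m.choose ij.1 •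
      ((k.descFactorial ij.1 * 2 ^ ij.2 * s.descFactorial ij.2 : ℕ) : ℝ) •
        Ma (k - ij.1) (s - ij.2) q := by
  induction m generalizing q with
  | zero => simp
  | succ m ih =>
    rw [Function.iterate_succ_apply', funext ih, Dbar_sum]
    · rw [sum_antidiagonal_choose_succ_nsmul (fun i j =>
          ((k.descFactorial i * 2 ^ j * s.descFactorial j : ℕ) : ℝ) • Ma (k - i) (s - j) q),
        add_comm, ← sum_add_distrib]
      refine sum_congr rfl fun ij hij => ?_
      rw [Nat.choose_symm_of_eq_add (mem_antidiagonal.mp hij).symm]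
      simp only [← Nat.cast_smul_eq_nsmul ℝ, Dbar_const_smul, Dbar_Ma, smul_add, smul_smul,
        Nat.descFactorial_succ, Nat.sub_sub]
      congr 2 <;> push_cast <;> ring
    · intro ij _
      fun_prop

lemma cast_descFactorial_eq_div {n i : ℕ} (h : i ≤ n) :
    (n.descFactorial i : ℝ) = n.factorial / (n - i).factorial := by
  rw [eq_div_iff (by positivity), mul_comm, ← Nat.cast_mul, Nat.factorial_mul_descFactorial h]

theorem generalized_appell_property_general (k s : ℕ) (hs : k + 1 ≤ s) (q : ℍ[ℝ]) :
    (Dbar^[k+1] (Ma k s)) q =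
      ∑ j ∈ Finset.Icc 1 (k+1),
        ((2:ℝ)^j * ((k+1).choose j) * k.factorial * s.factorial /
            ((j-1).factorial * (s-j).factorial)) • Ma (j-1) (s-j) q := by
  rw [iterate_Dbar_Ma, ← Nat.sum_antidiagonal_swap, Nat.sum_antidiagonal_eq_sum_range_succ_mk,
    sum_range_succ', ← Finset.Ico_add_one_right_eq_Icc, sum_Ico_eq_sum_range]
  simp only [Prod.fst_swap, Prod.snd_swap, Nat.sub_zero, Nat.descFactorial_of_lt k.lt_succ_self,
    zero_mul, Nat.cast_zero, zero_smul, smul_zero, add_zero, add_tsub_cancel_right]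
  refine sum_congr rfl fun j hj => ?_
  have hjk : j ≤ k := Nat.lt_succ_iff.mp (mem_range.mp hj)
  rw [Nat.add_sub_add_right, Nat.sub_sub_self hjk, add_comm 1 j, Nat.add_sub_cancel,
    ← Nat.cast_smul_eq_nsmul ℝ, smul_smul]
  congr 1
  rw [Nat.choose_symm_of_eq_add (by omega : k + 1 = k - j + (j + 1))]
  push_cast
  rw [cast_descFactorial_eq_div (Nat.sub_le k j), cast_descFactorial_eq_div (by omega : j + 1 ≤ s),
    Nat.sub_sub_self hjk]
  field_simp

/-- Generalized Appell property: for `n ≥ 0` fixed, `0 ≤ k ≤ n` and `s ≥ k+1`,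
`D̄^{k+1}(M_{k,s}(q,q̄)) = Σ_{j=1}^{k+1} 2^j C(k+1,j) k!s!/((j−1)!(s−j)!) M_{j−1,s−j}(q,q̄)`. -/
theorem generalized_appell_property (n k s : ℕ) (hk : k ≤ n) (hs : k + 1 ≤ s) (q : ℍ[ℝ]) :
    (Dbar^[k+1] (Ma k s)) q =
      ∑ j ∈ Finset.Icc 1 (k+1),
        ((2:ℝ)^j * ((k+1).choose j) * k.factorial * s.factorial /
            ((j-1).factorial * (s-j).factorial)) • Ma (j-1) (s-j) q :=
  generalized_appell_property_general k s hs q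
end
end
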